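/- Any skew Bollobás system of pairs of subspaces (A_i, B_i) of a vector space V over a field, with dim A_i = a and dim B_i = b for all i, A_i ∩ B_i = {0}, and A_i ∩ B_j ≠ {0} for i < j, satisfies m ≤ C(a+b, a), where m is the number of pairs. In particular the upper bound holds independently of dim V. -/

import Mathlib

/-!
Lovász's exterior-algebra argument. Pick bases `f i` of `A i` and `g i` of `B i`. If the ambient
space has dimension exactly `a + b`, the vectors `∧ f i ∈ ⋀^a` are linearly independent: wedging
with `∧ g j` is nonzero for `j = i` and kills `∧ f i` for `i < j`, a triangular pattern. Hence
`m ≤ dim ⋀^a = C(a + b, a)`. To reach dimension `a + b`, pass to the finite-dimensional span of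
all basis vectors, extend scalars to an algebraic closure (an infinite field; linear (in)dependence
of coordinate vectors is unchanged), and quotient by a subspace in general position, i.e. meeting
each of the finitely many `(a + b)`-dimensional spaces `A i ⊕ B i` only in `0`; over an infinite
field such a subspace is built one vector at a time, since a vector space is not a finite union of
proper subspaces.
-/

open Module Submodule Set

theorem Fin.comp_append {α β : Type*} {p q : ℕ} (φ : α → β) (x : Fin p → α) (y : Fin q → α) :
    φ ∘ Fin.append x y = Fin.append (φ ∘ x) (φ ∘ y) := by
  ext i
  induction i using Fin.addCases <;> simp

theorem linearIndependent_finAppend_iff {R M : Type*} [Ring R] [AddCommGroup M] [Module R M]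
    {p q : ℕ} (u : Fin p → M) (v : Fin q → M) :
    LinearIndependent R (Fin.append u v) ↔ LinearIndependent R u ∧ LinearIndependent R v ∧
      Disjoint (span R (range u)) (span R (range v)) := by
  rw [← linearIndependent_equiv finSumFinEquiv, linearIndependent_sum]
  have hl : Fin.append u v ∘ finSumFinEquiv ∘ Sum.inl = u := by ext; simp
  have hr : Fin.append u v ∘ finSumFinEquiv ∘ Sum.inr = v := by ext; simp
  simp only [Function.comp_assoc, hl, hr]

theorem Submodule.exists_linearIndependent_span_eq {K V : Type*} [DivisionRing K] [AddCommGroup V]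
    [Module K V] (p : Submodule K V) [FiniteDimensional K p] {n : ℕ} (hn : finrank K p = n) :
    ∃ v : Fin n → V, LinearIndependent K v ∧ span K (range v) = p := by
  let b := finBasisOfFinrankEq K p hn
  refine ⟨p.subtype ∘ b, b.linearIndependent.map' _ p.ker_subtype, ?_⟩
  rw [range_comp, ← Submodule.map_span, b.span_eq, Submodule.map_top, range_subtype]

theorem ExteriorAlgebra.ιMulti_ne_zero_of_linearIndependent {K E : Type*} [Field K] [AddCommGroup E]
    [Module K E] {n : ℕ} {v : Fin n → E} (hv : LinearIndependent K v) :
    ExteriorAlgebra.ιMulti K n v ≠ 0 := by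
  have h := (exteriorPower.ιMulti_family_linearIndependent_field (n := n) hv).ne_zero
    ⟨Finset.univ, by simp⟩
  rwa [exteriorPower.ιMulti_family, StrictMono.eq_id (OrderEmbedding.strictMono _),
    Function.comp_id, ne_eq, ← Subtype.coe_inj, exteriorPower.ιMulti_apply_coe] at h

theorem LinearIndependent.of_triangular {ι K M N : Type*} [LinearOrder ι] [DivisionRing K]
    [AddCommGroup M] [Module K M] [AddCommGroup N] [Module K N] (v : ι → M) (ψ : ι → M →ₗ[K] N)
    (hdiag : ∀ i, ψ i (v i) ≠ 0) (hlt : ∀ i j, i < j → ψ j (v i) = 0) :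
    LinearIndependent K v := by
  rw [linearIndependent_iff']
  intro s
  induction s using Finset.induction_on_max with
  | empty => simp
  | insert j s hmax ih =>
    intro c hsum i hi
    have hj : j ∉ s := fun h => lt_irrefl j (hmax j h)
    have hcj : c j = 0 := by
      have : c j • ψ j (v j) = 0 :=
        calc c j • ψ j (v j) = ψ j (∑ i ∈ insert j s, c i • v i) := by
              rw [Finset.sum_insert hj, map_add, map_sum, Finset.sum_eq_zero fun i hi => by
                rw [map_smul, hlt i j (hmax i hi), smul_zero], add_zero, map_smul]
          _ = 0 := by rw [hsum, map_zero]
      exact (smul_eq_zero.mp this).resolve_right (hdiag j)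
    rw [Finset.sum_insert hj, hcj, zero_smul, zero_add] at hsum
    rcases Finset.mem_insert.mp hi with rfl | hi
    · exact hcj
    · exact ih c hsum i hi

theorem Subspace.exists_forall_notMem {K E ι : Type*} [DivisionRing K] [Infinite K] [AddCommGroup E]
    [Module K E] [Finite ι] {p : ι → Subspace K E} (hp : ∀ i, p i ≠ ⊤) : ∃ x, ∀ i, x ∉ p i := by
  by_contra! h
  obtain ⟨i, hi⟩ := Subspace.exists_eq_top_of_iUnion_eq_univ
    (eq_univ_of_forall fun x => mem_iUnion.2 (h x))
  exact hp i hi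

theorem Submodule.exists_finrank_eq_forall_disjoint {K W ι : Type*} [DivisionRing K] [Infinite K]
    [AddCommGroup W] [Module K W] [FiniteDimensional K W] [Finite ι] {U : ι → Submodule K W}
    {d : ℕ} (hU : ∀ i, finrank K (U i) ≤ d) (k : ℕ) (hk : k + d ≤ finrank K W) :
    ∃ C : Submodule K W, finrank K C = k ∧ ∀ i, Disjoint C (U i) := by
  induction k with
  | zero => exact ⟨⊥, finrank_bot K W, fun _ => disjoint_bot_left⟩
  | succ k ih =>
    obtain ⟨C, hCk, hC⟩ := ih (by omega)
    have hlt : ∀ X : Submodule K W, finrank K X ≤ d → C ⊔ X ≠ ⊤ := fun X hX htop => by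
      have := C.finrank_add_le_finrank_add_finrank X
      rw [htop, finrank_top] at this
      omega
    obtain ⟨x, hx⟩ := Subspace.exists_forall_notMem (p := fun o : Option ι => C ⊔ o.elim ⊥ U)
      (Option.forall.2 ⟨hlt ⊥ (by simp), fun i => hlt (U i) (hU i)⟩)
    have hxC : x ∉ C := by simpa using hx none
    have hx0 : x ≠ 0 := by rintro rfl; exact hxC C.zero_mem
    refine ⟨C ⊔ K ∙ x, ?_, fun i => ?_⟩
    · have := C.finrank_sup_add_finrank_inf_eq (K ∙ x)
      rw [((disjoint_span_singleton' hx0).2 hxC).eq_bot, finrank_bot, finrank_span_singleton hx0]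
        at this
      omega
    · rw [sup_comm]
      exact (hC i).disjoint_sup_left_of_disjoint_sup_right
        ((disjoint_span_singleton' hx0).2 (hx (some i))).symm

theorem Module.exists_linearMap_pi_disjoint_ker {K V : Type*} [DivisionRing K] [AddCommGroup V]
    [Module K V] {s : Set V} (hs : s.Finite) :
    ∃ (N : ℕ) (π : V →ₗ[K] Fin N → K), Disjoint (span K s) (LinearMap.ker π) := by
  have : FiniteDimensional K (span K s) := FiniteDimensional.span_of_finite K hs
  obtain ⟨r, hr⟩ := (span K s).subtype.exists_leftInverse_of_injective (span K s).ker_subtype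
  refine ⟨_, (finBasis K (span K s)).equivFun.toLinearMap ∘ₗ r, ?_⟩
  rw [disjoint_def]
  intro x hx hπx
  have hrx : r x = ⟨x, hx⟩ := LinearMap.congr_fun hr ⟨x, hx⟩
  simpa [hrx] using hπx

/-- With `f i`, `g i` bases of `A i`, `B i`, linear independence of `Fin.append (f i) (g j)` says
exactly that `A i ⊓ B j = ⊥`. -/
structure IsSkewBollobasSystem (K : Type*) {W ι : Type*} [Semiring K] [AddCommMonoid W]
    [Module K W] [LT ι] {a b : ℕ} (f : ι → Fin a → W) (g : ι → Fin b → W) : Prop where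
  linearIndependent : ∀ i, LinearIndependent K (Fin.append (f i) (g i))
  not_linearIndependent : ∀ ⦃i j⦄, i < j → ¬ LinearIndependent K (Fin.append (f i) (g j))

namespace IsSkewBollobasSystem

variable {K W ι : Type*} {a b : ℕ} {f : ι → Fin a → W} {g : ι → Fin b → W}

theorem map [Ring K] [AddCommGroup W] [Module K W] [LT ι] (h : IsSkewBollobasSystem K f g)
    {W' : Type*} [AddCommGroup W'] [Module K W'] (φ : W →ₗ[K] W')
    (hφ : ∀ i, Disjoint (span K (range (Fin.append (f i) (g i)))) (LinearMap.ker φ)) :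
    IsSkewBollobasSystem K (fun i => φ ∘ f i) (fun i => φ ∘ g i) where
  linearIndependent i := by
    rw [← Fin.comp_append]
    exact (h.linearIndependent i).map (hφ i)
  not_linearIndependent i j hij hind := by
    rw [← Fin.comp_append] at hind
    exact h.not_linearIndependent hij hind.of_comp

theorem algebraMap_comp {κ : Type*} [Finite κ] [CommRing K] [LT ι] {f : ι → Fin a → κ → K}
    {g : ι → Fin b → κ → K} (h : IsSkewBollobasSystem K f g) (L : Type*) [CommRing L] [IsDomain L]
    [Algebra K L] [FaithfulSMul K L] :
    IsSkewBollobasSystem L (fun i => (algebraMap K L ∘ ·) ∘ f i)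
      (fun i => (algebraMap K L ∘ ·) ∘ g i) where
  linearIndependent i := by
    rw [← Fin.comp_append]
    exact linearIndependent_algebraMap_comp_iff.2 (h.linearIndependent i)
  not_linearIndependent i j hij := by
    rw [← Fin.comp_append]
    exact mt linearIndependent_algebraMap_comp_iff.1 (h.not_linearIndependent hij)

variable [Field K] [AddCommGroup W] [Module K W] [LinearOrder ι] [Fintype ι]

theorem card_le_choose_of_finrank_eq [FiniteDimensional K W] (h : IsSkewBollobasSystem K f g)
    (hW : finrank K W = a + b) : Fintype.card ι ≤ (a + b).choose a := by
  let ψ j : ⋀[K]^a W →ₗ[K] ExteriorAlgebra K W :=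
    LinearMap.mulRight K (ExteriorAlgebra.ιMulti K b (g j)) ∘ₗ (⋀[K]^a W).subtype
  have hψ i j : ψ j (exteriorPower.ιMulti K a (f i)) =
      ExteriorAlgebra.ιMulti K (a + b) (Fin.append (f i) (g j)) :=
    ExteriorAlgebra.ιMulti_mul_ιMulti (f i) (g j)
  have hindep : LinearIndependent K fun i => exteriorPower.ιMulti K a (f i) :=
    .of_triangular _ ψ
      (fun j => by
        rw [hψ]
        exact ExteriorAlgebra.ιMulti_ne_zero_of_linearIndependent (h.linearIndependent j))
      (fun i j hij => by
        rw [hψ]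
        exact AlternatingMap.map_linearDependent _ _ (h.not_linearIndependent hij))
  calc Fintype.card ι ≤ finrank K (⋀[K]^a W) := hindep.fintype_card_le_finrank
    _ = (a + b).choose a := by rw [exteriorPower.finrank_eq, hW]

theorem card_le_choose_of_infinite [Infinite K] [FiniteDimensional K W]
    (h : IsSkewBollobasSystem K f g) : Fintype.card ι ≤ (a + b).choose a := by
  obtain _ | ⟨⟨i₀⟩⟩ := isEmpty_or_nonempty ι
  · simp
  let U i := span K (range (Fin.append (f i) (g i)))
  have hU i : finrank K (U i) = a + b := by
    rw [finrank_span_eq_card (h.linearIndependent i), Fintype.card_fin]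
  have hab : a + b ≤ finrank K W := hU i₀ ▸ (U i₀).finrank_le
  obtain ⟨C, hC, hCU⟩ := exists_finrank_eq_forall_disjoint (fun i => (hU i).le)
    (finrank K W - (a + b)) (by omega)
  have hQ : finrank K (W ⧸ C) = a + b := by
    have := C.finrank_quotient_add_finrank
    omega
  refine (h.map C.mkQ fun i => ?_).card_le_choose_of_finrank_eq hQ
  rw [ker_mkQ]
  exact (hCU i).symm

theorem card_le_choose (h : IsSkewBollobasSystem K f g) : Fintype.card ι ≤ (a + b).choose a := by
  obtain ⟨N, π, hπ⟩ := exists_linearMap_pi_disjoint_ker (K := K)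
    (finite_iUnion fun i => finite_range (Fin.append (f i) (g i)))
  have hcoord := h.map π fun i => hπ.mono_left (span_mono (subset_iUnion_of_subset i subset_rfl))
  exact (hcoord.algebraMap_comp (AlgebraicClosure K)).card_le_choose_of_infinite

end IsSkewBollobasSystem

theorem skew_bollobas_subspaces_general_field {K V : Type*} [Field K]
    [AddCommGroup V] [Module K V] (m a b : ℕ)
    (A B : Fin m → Submodule K V)
    (hAfin : ∀ i, FiniteDimensional K ↥(A i))
    (hBfin : ∀ i, FiniteDimensional K ↥(B i))
    (hA : ∀ i, Module.finrank K ↥(A i) = a)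
    (hB : ∀ i, Module.finrank K ↥(B i) = b)
    (hdisj : ∀ i, A i ⊓ B i = ⊥)
    (hcross : ∀ i j : Fin m, i < j → A i ⊓ B j ≠ ⊥) :
    m ≤ (a + b).choose a := by
  choose f hf hfA using fun i => have := hAfin i; (A i).exists_linearIndependent_span_eq (hA i)
  choose g hg hgB using fun i => have := hBfin i; (B i).exists_linearIndependent_span_eq (hB i)
  have h : IsSkewBollobasSystem K f g :=
    ⟨fun i => (linearIndependent_finAppend_iff _ _).2
      ⟨hf i, hg i, by rw [hfA, hgB]; exact disjoint_iff.2 (hdisj i)⟩,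
    fun i j hij hind => hcross i j hij <| disjoint_iff.1 <| by
      simpa only [hfA, hgB] using ((linearIndependent_finAppend_iff _ _).1 hind).2.2⟩
  simpa using h.card_le_choose
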